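/- (VUB nonlinear cut.) For all reals v_i, v_j, θ with vl_i ≤ v_i ≤ vu_i, vl_j ≤ v_j ≤ vu_j and θl ≤ θ ≤ θu, setting w_i = v_i², wR = v_i·v_j·cos θ and wI = v_i·v_j·sin θ, one has c11·wR + c12·wI + c13·w_i + c14·(wR² + wI²)/w_i + c15 ≥ 0, where c11 = vσ_i·vσ_j·cos φ, c12 = vσ_i·vσ_j·sin φ, c13 = −vu_j·cos δ·vσ_j, c14 = −vu_i·cos δ·vσ_i, c15 = −vu_i·vu_j·cos δ·(vl_i·vl_j − vu_i·vu_j). -/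

import Mathlib

/-!
Since `wR² + wI² = w_i w_j`, the fourth term equals `c14 · v_j²`, and the first two terms combine
to `vσ_i vσ_j v_i v_j cos (θ - φ)`. As `|θ - φ| ≤ δ ≤ π/2`, this is at least
`vσ_i vσ_j v_i v_j cos δ` with `cos δ ≥ 0`, so the cut reduces to the nonnegativity on the box
`[vl_i, vu_i] × [vl_j, vu_j]` of a quadratic polynomial in `(v_i, v_j)`, which is a sum of three
products of nonnegative factors.
-/

open Real

lemma sq_mul_cos_add_sq_mul_sin_div_sq {a : ℝ} (ha : a ≠ 0) (b θ : ℝ) :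
    ((a * b * cos θ) ^ 2 + (a * b * sin θ) ^ 2) / a ^ 2 = b ^ 2 := by
  rw [div_eq_iff (pow_ne_zero 2 ha)]
  linear_combination a ^ 2 * b ^ 2 * sin_sq_add_cos_sq θ

lemma cos_le_cos_of_abs_le {x δ : ℝ} (hx : |x| ≤ δ) (hδ : δ ≤ π) : cos δ ≤ cos x := by
  rw [← cos_abs x]
  exact cos_le_cos_of_nonneg_of_le_pi (abs_nonneg x) hδ hx

lemma vub_quadratic_nonneg {vli vui vlj vuj vi vj : ℝ} (hvli : 0 ≤ vli) (hvlj : 0 ≤ vlj)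
    (hi : vi ∈ Set.Icc vli vui) (hj : vj ∈ Set.Icc vlj vuj) :
    0 ≤ (vli + vui) * (vlj + vuj) * (vi * vj) - vuj * (vlj + vuj) * vi ^ 2
      - vui * (vli + vui) * vj ^ 2 - vui * vuj * (vli * vlj - vui * vuj) := by
  obtain ⟨hi, hi'⟩ := hi
  obtain ⟨hj, hj'⟩ := hj
  have hvui : 0 ≤ vui := by linarith
  have hvuj : 0 ≤ vuj := by linarith
  have hσi : 0 ≤ vli + vui := by linarith
  have hσj : 0 ≤ vlj + vuj := by linarith
  calc 0 ≤ vuj * (vlj + vuj) * ((vui - vi) * (vi - vli))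
        + vui * (vli + vui) * ((vuj - vj) * (vj - vlj))
        + (vli + vui) * (vlj + vuj) * ((vui - vi) * (vuj - vj)) := by
        have := sub_nonneg.2 hi; have := sub_nonneg.2 hi'
        have := sub_nonneg.2 hj; have := sub_nonneg.2 hj'
        positivity
    _ = _ := by ring

theorem vub_nonlinear_cut_valid_general
    (vli vui vlj vuj θl θu φ δ vσi vσj : ℝ)
    (hvli : 0 < vli) (hvlj : 0 < vlj)
    (hθl : -(Real.pi / 2) ≤ θl) (hθu : θu ≤ Real.pi / 2)
    (hφ : φ = (θu + θl) / 2) (hδ : δ = (θu - θl) / 2)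
    (hσi : vσi = vli + vui) (hσj : vσj = vlj + vuj) :
    ∀ vi vj θ : ℝ, vli ≤ vi → vi ≤ vui → vlj ≤ vj → vj ≤ vuj → θl ≤ θ → θ ≤ θu →
      vσi * vσj * Real.cos φ * (vi * vj * Real.cos θ)
        + vσi * vσj * Real.sin φ * (vi * vj * Real.sin θ)
        + (-(vuj * Real.cos δ * vσj)) * vi ^ 2
        + (-(vui * Real.cos δ * vσi)) *
            (((vi * vj * Real.cos θ) ^ 2 + (vi * vj * Real.sin θ) ^ 2) / vi ^ 2)
        + (-(vui * vuj * Real.cos δ * (vli * vlj - vui * vuj))) ≥ 0 := by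
  intro vi vj θ hi hi' hj hj' hθ hθ'
  have hvi : 0 < vi := hvli.trans_le hi
  have hvj : 0 < vj := hvlj.trans_le hj
  have hcos : cos δ ≤ cos (θ - φ) :=
    cos_le_cos_of_abs_le (abs_le.2 ⟨by linarith, by linarith⟩) (by linarith [pi_pos])
  have hcosδ : 0 ≤ cos δ := cos_nonneg_of_mem_Icc ⟨by linarith, by linarith⟩
  have hF := vub_quadratic_nonneg hvli.le hvlj.le ⟨hi, hi'⟩ ⟨hj, hj'⟩
  rw [sq_mul_cos_add_sq_mul_sin_div_sq hvi.ne' vj θ]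
  subst hσi hσj
  have hσ : 0 ≤ (vli + vui) * (vlj + vuj) * (vi * vj) := by
    have := hvli.trans_le (hi.trans hi'); have := hvlj.trans_le (hj.trans hj'); positivity
  calc _ = (vli + vui) * (vlj + vuj) * (vi * vj) * (cos (θ - φ) - cos δ)
        + cos δ * ((vli + vui) * (vlj + vuj) * (vi * vj) - vuj * (vlj + vuj) * vi ^ 2
          - vui * (vli + vui) * vj ^ 2 - vui * vuj * (vli * vlj - vui * vuj)) := by
        rw [cos_sub]; ring
    _ ≥ 0 := add_nonneg (mul_nonneg hσ (sub_nonneg.2 hcos)) (mul_nonneg hcosδ hF)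

theorem vub_nonlinear_cut_valid
    (vli vui vlj vuj θl θu φ δ vσi vσj : ℝ)
    (hvli : 0 < vli) (hvi : vli ≤ vui) (hvlj : 0 < vlj) (hvj : vlj ≤ vuj)
    (hθl : -(Real.pi / 2) ≤ θl) (hθ : θl ≤ θu) (hθu : θu ≤ Real.pi / 2)
    (hφ : φ = (θu + θl) / 2) (hδ : δ = (θu - θl) / 2)
    (hσi : vσi = vli + vui) (hσj : vσj = vlj + vuj) :
    ∀ vi vj θ : ℝ, vli ≤ vi → vi ≤ vui → vlj ≤ vj → vj ≤ vuj → θl ≤ θ → θ ≤ θu →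
      vσi * vσj * Real.cos φ * (vi * vj * Real.cos θ)
        + vσi * vσj * Real.sin φ * (vi * vj * Real.sin θ)
        + (-(vuj * Real.cos δ * vσj)) * vi ^ 2
        + (-(vui * Real.cos δ * vσi)) *
            (((vi * vj * Real.cos θ) ^ 2 + (vi * vj * Real.sin θ) ^ 2) / vi ^ 2)
        + (-(vui * vuj * Real.cos δ * (vli * vlj - vui * vuj))) ≥ 0 :=
  vub_nonlinear_cut_valid_general vli vui vlj vuj θl θu φ δ vσi vσj hvli hvlj hθl hθu hφ hδ hσi hσj
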